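/- Let H be a connected graph with exactly one loop, at vertex v. If H is a median factor candidate in the sense that there exists a connected graph G containing P_3 as a subgraph with G × H median, then v has degree at most 2 in H (counting the loop once); in particular, v cannot be adjacent to two distinct non-loop neighbors. -/
import Mathlib


/-- A graph allowing loops: a symmetric adjacency relation on `V`. -/
structure LoopGraph (V : Type) where
  Adj : V → V → Prop
  symm : ∀ {u v : V}, Adj u v → Adj v u

namespace LoopGraph

variable {V W : Type}

/-- `Walk G u v n` : there is a walk of length `n` from `u` to `v` in `G`. -/
inductive Walk (G : LoopGraph V) : V → V → ℕ → Prop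
  | nil (u : V) : Walk G u u 0
  | cons {u w v : V} {n : ℕ} : G.Adj u w → Walk G w v n → Walk G u v (n + 1)

def Connected (G : LoopGraph V) : Prop := ∀ u v : V, ∃ n : ℕ, G.Walk u v n

/-- Distance: the length of a shortest walk. -/
noncomputable def dist (G : LoopGraph V) (u v : V) : ℕ := sInf {n : ℕ | G.Walk u v n}

/-- `m` lies on a geodesic from `a` to `b`. -/
def Between (G : LoopGraph V) (a m b : V) : Prop :=
  G.dist a m + G.dist m b = G.dist a b

/-- `m` is a median of the triple `a, b, c`. -/
def MedianOf (G : LoopGraph V) (m a b c : V) : Prop :=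
  G.Between a m b ∧ G.Between a m c ∧ G.Between b m c

/-- A median graph: connected, loopless, and every triple of vertices has a
unique median. -/
def IsMedian (G : LoopGraph V) : Prop :=
  (∀ v : V, ¬ G.Adj v v) ∧ G.Connected ∧
    ∀ a b c : V, ∃! m : V, G.MedianOf m a b c

/-- The direct (tensor) product of two graphs with loops. -/
def tensor (G : LoopGraph V) (H : LoopGraph W) : LoopGraph (V × W) where
  Adj p q := G.Adj p.1 q.1 ∧ H.Adj p.2 q.2
  symm h := ⟨G.symm h.1, H.symm h.2⟩

def Bipartite (G : LoopGraph V) : Prop :=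
  ∃ c : V → Bool, ∀ {u v : V}, G.Adj u v → c u ≠ c v

/-- `G` contains `K_{2,3}` as a (not necessarily induced) subgraph. -/
def ContainsK23 (G : LoopGraph V) : Prop :=
  ∃ f : Fin 2 ⊕ Fin 3 → V, Function.Injective f ∧
    ∀ (a : Fin 2) (b : Fin 3), G.Adj (f (Sum.inl a)) (f (Sum.inr b))

end LoopGraph

/-- The path graph on `k` vertices, as a loop graph (no loops). -/
def pathLG (k : ℕ) : LoopGraph (Fin k) where
  Adj i j := i.val + 1 = j.val ∨ j.val + 1 = i.val
  symm h := h.symm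

/-- `E_l`: the path on `l` vertices `x_1, …, x_l` with a loop at the end vertex `x_1`. -/
def ELoopPath (l : ℕ) : LoopGraph (Fin l) where
  Adj i j := i.val + 1 = j.val ∨ j.val + 1 = i.val ∨ (i.val = 0 ∧ j.val = 0)
  symm h := by tauto


namespace LoopGraph
variable {V : Type} {G : LoopGraph V}

lemma dist_le' {u v : V} {n : ℕ} (h : G.Walk u v n) : G.dist u v ≤ n := Nat.sInf_le h

lemma eq_of_walk_zero' {u v : V} (h : G.Walk u v 0) : u = v := by cases h; rfl

lemma adj_of_walk_one' {u v : V} (h : G.Walk u v 1) : G.Adj u v := by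
  cases h with
  | cons ha hw => cases hw; exact ha

lemma walk_dist' (hc : G.Connected) (u v : V) : G.Walk u v (G.dist u v) :=
  Nat.sInf_mem (hc u v)

lemma dist_eq_zero_iff' (hc : G.Connected) {u v : V} : G.dist u v = 0 ↔ u = v := by
  constructor
  · intro h
    have := walk_dist' hc u v
    rw [h] at this
    exact eq_of_walk_zero' this
  · rintro rfl
    exact Nat.le_zero.mp (dist_le' (Walk.nil u))

lemma dist_eq_one' (hc : G.Connected) {u v : V} (hne : u ≠ v) (h : G.Adj u v) :
    G.dist u v = 1 := by
  have h1 : G.dist u v ≤ 1 := dist_le' (Walk.cons h (Walk.nil v))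
  have h0 : G.dist u v ≠ 0 := fun h0 => hne ((dist_eq_zero_iff' hc).mp h0)
  omega

lemma no_triangle (hM : G.IsMedian) {p q r : V} (hpq : G.Adj p q) (hqr : G.Adj q r)
    (hpr : G.Adj p r) (h1 : p ≠ q) (h2 : q ≠ r) (h3 : p ≠ r) : False := by
  obtain ⟨-, hc, hm⟩ := hM
  obtain ⟨m, ⟨hb1, hb2, hb3⟩, -⟩ := hm p q r
  rw [Between, dist_eq_one' hc h1 hpq] at hb1
  rw [Between, dist_eq_one' hc h3 hpr] at hb2
  rw [Between, dist_eq_one' hc h2 hqr] at hb3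
  have e1 : m = p ∨ m = q := by
    rcases Nat.add_eq_one_iff.mp hb1 with ⟨h,_⟩|⟨_,h⟩
    · exact Or.inl ((dist_eq_zero_iff' hc).mp h).symm
    · exact Or.inr ((dist_eq_zero_iff' hc).mp h)
  have e2 : m = p ∨ m = r := by
    rcases Nat.add_eq_one_iff.mp hb2 with ⟨h,_⟩|⟨_,h⟩
    · exact Or.inl ((dist_eq_zero_iff' hc).mp h).symm
    · exact Or.inr ((dist_eq_zero_iff' hc).mp h)
  have e3 : m = q ∨ m = r := by
    rcases Nat.add_eq_one_iff.mp hb3 with ⟨h,_⟩|⟨_,h⟩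
    · exact Or.inl ((dist_eq_zero_iff' hc).mp h).symm
    · exact Or.inr ((dist_eq_zero_iff' hc).mp h)
  rcases e1 with h|h
  · subst h
    rcases e3 with h|h
    · exact h1 h
    · exact h3 h
  · subst h
    rcases e2 with h|h
    · exact h1 h.symm
    · exact h2 h

lemma no_K23 (hM : G.IsMedian) (hK : G.ContainsK23) : False := by
  obtain ⟨f, hf, hadj⟩ := hK
  set a := f (Sum.inl 0) with ha
  set b := f (Sum.inl 1) with hb
  set c : Fin 3 → V := fun i => f (Sum.inr i) with hcdef
  have hab : a ≠ b := fun h => by simpa using hf h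
  have hac : ∀ i, a ≠ c i := fun i h => by simpa using hf h
  have hbc : ∀ i, b ≠ c i := fun i h => by simpa using hf h
  have hcc : ∀ i j, i ≠ j → c i ≠ c j := fun i j hij h => hij (by simpa using hf h)
  obtain ⟨hl, hc, hm⟩ := hM
  have hdac : ∀ i, G.dist a (c i) = 1 := fun i => dist_eq_one' hc (hac i) (hadj 0 i)
  have hdbc : ∀ i, G.dist b (c i) = 1 := fun i => dist_eq_one' hc (hbc i) (hadj 1 i)
  have hdca : ∀ i, G.dist (c i) a = 1 := fun i =>
    dist_eq_one' hc (Ne.symm (hac i)) (G.symm (hadj 0 i))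
  have hdcb : ∀ i, G.dist (c i) b = 1 := fun i =>
    dist_eq_one' hc (Ne.symm (hbc i)) (G.symm (hadj 1 i))
  have hnadj : ∀ i j, i ≠ j → ¬ G.Adj (c i) (c j) := by
    intro i j hij hadj'
    exact no_triangle ⟨hl, hc, hm⟩ hadj'
      (G.symm (hadj 0 j)) (G.symm (hadj 0 i)) (hcc i j hij)
      (Ne.symm (hac j)) (Ne.symm (hac i))
  have hdcc : ∀ i j, i ≠ j → G.dist (c i) (c j) = 2 := by
    intro i j hij
    have hle : G.dist (c i) (c j) ≤ 2 :=
      dist_le' (Walk.cons (G.symm (hadj 0 i)) (Walk.cons (hadj 0 j) (Walk.nil _)))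
    have h0 : G.dist (c i) (c j) ≠ 0 := fun h => hcc i j hij ((dist_eq_zero_iff' hc).mp h)
    have h1 : G.dist (c i) (c j) ≠ 1 := by
      intro h
      have hw := walk_dist' hc (c i) (c j)
      rw [h] at hw
      exact hnadj i j hij (adj_of_walk_one' hw)
    omega
  obtain ⟨m, -, hun⟩ := hm (c 0) (c 1) (c 2)
  have hmedA : G.MedianOf a (c 0) (c 1) (c 2) :=
    ⟨by rw [Between, hdca, hdac, hdcc 0 1 (by decide)],
     by rw [Between, hdca, hdac, hdcc 0 2 (by decide)],
     by rw [Between, hdca, hdac, hdcc 1 2 (by decide)]⟩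
  have hmedB : G.MedianOf b (c 0) (c 1) (c 2) :=
    ⟨by rw [Between, hdcb, hdbc, hdcc 0 1 (by decide)],
     by rw [Between, hdcb, hdbc, hdcc 0 2 (by decide)],
     by rw [Between, hdcb, hdbc, hdcc 1 2 (by decide)]⟩
  exact hab ((hun a hmedA).trans (hun b hmedB).symm)

end LoopGraph

/-- Let `H` be a connected graph whose unique loop is at `v`.  If there is a
connected graph `G` containing `P₃` as a subgraph such that `G × H` is median,
then `v` has degree at most 2 in `H` (counting the loop once); in particular
`v` has at most one non-loop neighbor. -/
theorem loop_vertex_degree_le_two {W : Type} (H : LoopGraph W)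
    (hHc : H.Connected) (v : W) (hloop : H.Adj v v)
    (huniq : ∀ w : W, H.Adj w w → w = v)
    (hmed : ∃ (V : Type) (G : LoopGraph V), G.Connected ∧
      (∃ v₁ v₂ v₃ : V, v₁ ≠ v₂ ∧ v₂ ≠ v₃ ∧ v₁ ≠ v₃ ∧ G.Adj v₁ v₂ ∧ G.Adj v₂ v₃) ∧
      (G.tensor H).IsMedian) :
    Set.ncard {w : W | H.Adj v w} ≤ 2 ∧
      ∀ x z : W, H.Adj v x → H.Adj v z → x ≠ v → z ≠ v → x = z := by
  obtain ⟨V, G, hGc, ⟨v₁, v₂, v₃, h12, h23, h13, ha12, ha23⟩, hMed⟩ := hmed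
  have key : ∀ x z : W, H.Adj v x → H.Adj v z → x ≠ v → z ≠ v → x = z := by
    intro x z hx hz hxv hzv
    by_contra hxz
    apply LoopGraph.no_K23 hMed
    refine ⟨Sum.elim ![(v₁, v), (v₃, v)] ![(v₂, x), (v₂, v), (v₂, z)], ?_, ?_⟩
    · rintro (p|p) (q|q) h <;> fin_cases p <;> fin_cases q <;>
        simp_all [Prod.ext_iff] <;> tauto
    · intro a b
      fin_cases a <;> fin_cases b
      · exact ⟨ha12, hx⟩
      · exact ⟨ha12, hloop⟩
      · exact ⟨ha12, hz⟩
      · exact ⟨G.symm ha23, hx⟩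
      · exact ⟨G.symm ha23, hloop⟩
      · exact ⟨G.symm ha23, hz⟩
  refine ⟨?_, key⟩
  by_cases hex : ∃ x, H.Adj v x ∧ x ≠ v
  · obtain ⟨x₀, hx₀, hx₀v⟩ := hex
    have hsub : {w : W | H.Adj v w} ⊆ {v, x₀} := by
      intro w hw
      by_cases hwv : w = v
      · exact Or.inl hwv
      · exact Or.inr (key w x₀ hw hx₀ hwv hx₀v)
    calc Set.ncard {w : W | H.Adj v w} ≤ Set.ncard {v, x₀} :=
          Set.ncard_le_ncard hsub ((Set.finite_singleton x₀).insert v)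
      _ ≤ 2 := (Set.ncard_insert_le v _).trans (by simp)
  · push_neg at hex
    have hsub : {w : W | H.Adj v w} ⊆ {v} := fun w hw => hex w hw
    calc Set.ncard {w : W | H.Adj v w} ≤ Set.ncard {v} :=
          Set.ncard_le_ncard hsub (Set.finite_singleton v)
      _ ≤ 2 := by simp
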